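/- Let G be a tree grammar with finitely many nonterminals and finitely many rules, and cost function with cost(r) > 0 for every rule r. Define the Bellman operator T : (Γ → ℝ≥0∞) → (Γ → ℝ≥0∞) by T(c)(X) = the infimum, over all rules r with lhs(r) = X and args(r) = [X₁,…,X_k], of cost(r) + Σᵢ c(Xᵢ) (with T(c)(X) = ⊤ if no rule has left-hand nonterminal X). Then the |Γ|-fold iterate of T applied to the constant-⊤ function computes the minimal costs: for every nonterminal X, T^{|Γ|}(⊤)(X) = ⨅ {cost(p) : p a program generated from X} (where the infimum of the empty set is ⊤). -/

import Mathlib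

/-- Finitely-branching trees with nodes labeled by elements of `R` (derivation trees). -/
inductive Tree' (R : Type) : Type
  | node : R → List (Tree' R) → Tree' R

/-- The label of the root node. -/
def Tree'.rootLabel {R : Type} : Tree' R → R
  | .node r _ => r

/-- A tree grammar: nonterminals `Γ`, derivation rules `R`, each rule having a
left-hand nonterminal and a list of argument nonterminals. -/
structure TreeGrammar where
  Γ : Type
  R : Type
  lhs : R → Γ
  args : R → List Γ

/-- Well-formed derivation trees (programs) of a tree grammar. -/
inductive TreeGrammar.WF (G : TreeGrammar) : Tree' G.R → Prop
  | node (r : G.R) (ts : List (Tree' G.R))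
      (hlen : ts.length = (G.args r).length)
      (hwf : ∀ t ∈ ts, G.WF t)
      (hlhs : ∀ i : ℕ, (h : i < ts.length) →
        G.lhs (ts[i].rootLabel) = (G.args r)[i]'(hlen ▸ h)) :
      G.WF (Tree'.node r ts)

/-- `p` is a program generated from the nonterminal `X`. -/
def TreeGrammar.GenFrom (G : TreeGrammar) (X : G.Γ) (p : Tree' G.R) : Prop :=
  G.WF p ∧ G.lhs p.rootLabel = X

/-- The cost of a program, extending a cost function on rules. -/
def costP {R : Type} (cost : R → ℝ) : Tree' R → ℝ
  | .node r ts => cost r + (ts.attach.map (fun t => costP cost t.1)).sum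
decreasing_by
  have := List.sizeOf_lt_of_mem t.2
  simp only [Tree'.node.sizeOf_spec]
  omega

/-- The number of nodes of a derivation tree. -/
def sizeP {R : Type} : Tree' R → ℕ
  | .node _ ts => 1 + (ts.attach.map (fun t => sizeP t.1)).sum
decreasing_by
  have := List.sizeOf_lt_of_mem t.2
  simp only [Tree'.node.sizeOf_spec]
  omega

/-- The depth of a derivation tree: number of nodes on a longest root-to-leaf path. -/
def depthP {R : Type} : Tree' R → ℕ
  | .node _ ts => 1 + (ts.attach.map (fun t => depthP t.1)).foldr max 0
decreasing_by
  have := List.sizeOf_lt_of_mem t.2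
  simp only [Tree'.node.sizeOf_spec]
  omega

/-- `p'` is a successor of `p` with respect to the nonterminal `X`:
`p'` is generated from `X`, has strictly larger cost than `p`, and no program
generated from `X` has cost strictly between the two. -/
def IsSucc (G : TreeGrammar) (cost : G.R → ℝ) (X : G.Γ) (p p' : Tree' G.R) : Prop :=
  G.GenFrom X p' ∧ costP cost p < costP cost p' ∧
    ∀ p'', G.GenFrom X p'' →
      ¬(costP cost p < costP cost p'' ∧ costP cost p'' < costP cost p')

/-- `X` occurs as the left-hand nonterminal of the rule labeling some node of the tree. -/
inductive OccursLhs (G : TreeGrammar) (X : G.Γ) : Tree' G.R → Prop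
  | here (r : G.R) (ts : List (Tree' G.R)) : G.lhs r = X → OccursLhs G X (.node r ts)
  | there (r : G.R) (ts : List (Tree' G.R)) (t : Tree' G.R) :
      t ∈ ts → OccursLhs G X t → OccursLhs G X (.node r ts)

/-- Condition (*): along every root-to-leaf path, no nonterminal occurs twice as the
left-hand nonterminal of the rules labeling the nodes on the path. -/
inductive StarCond (G : TreeGrammar) : Tree' G.R → Prop
  | node (r : G.R) (ts : List (Tree' G.R))
      (hsub : ∀ t ∈ ts, StarCond G t)
      (hnew : ∀ t ∈ ts, ¬ OccursLhs G (G.lhs r) t) :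
      StarCond G (.node r ts)

/-- `IsSubtree s t`: `s` is the subtree of `t` rooted at some node of `t`. -/
inductive IsSubtree {R : Type} : Tree' R → Tree' R → Prop
  | refl (t : Tree' R) : IsSubtree t t
  | child (s : Tree' R) (r : R) (ts : List (Tree' R)) (t : Tree' R) :
      t ∈ ts → IsSubtree s t → IsSubtree s (.node r ts)

/-- `IsStrictSubtree s t`: `s` is the subtree of `t` rooted at a strict descendant
of the root of `t`. -/
inductive IsStrictSubtree {R : Type} : Tree' R → Tree' R → Prop
  | child (s : Tree' R) (r : R) (ts : List (Tree' R)) (t : Tree' R) :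
      t ∈ ts → IsSubtree s t → IsStrictSubtree s (.node r ts)

/-- The subtree of a tree at a given position (a list of child indices), if it exists. -/
def subtreeAt {R : Type} : Tree' R → List ℕ → Option (Tree' R)
  | t, [] => some t
  | .node _ ts, i :: is =>
      match ts[i]? with
      | some t => subtreeAt t is
      | none => none

/-- Replacing the subtree at a given position by `q`. -/
def replaceAt {R : Type} : Tree' R → List ℕ → Tree' R → Tree' R
  | _, [], q => q
  | .node r ts, i :: is, q =>
      match ts[i]? with
      | some t => .node r (ts.set i (replaceAt t is q))
      | none => .node r ts

open scoped ENNReal in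
/-- The Bellman operator associated with a tree grammar and a cost function. -/
noncomputable def bellman (G : TreeGrammar) (cost : G.R → ℝ) (c : G.Γ → ℝ≥0∞) : G.Γ → ℝ≥0∞ :=
  fun X => ⨅ r ∈ {r : G.R | G.lhs r = X},
    (ENNReal.ofReal (cost r) + ((G.args r).map c).sum)

open scoped ENNReal

/-!
`(bellman G cost)^[k] ⊤ X` is the least cost of a program generated from `X` of depth at most `k`:
one Bellman step adds one level to the derivation trees. Since costs are nonnegative, a program
can be pruned without raising its cost: if the nonterminal at a node recurs below it, replace the
node's subtree by the lower one. A fully pruned program repeats no nonterminal along a path, so its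
depth is at most `|Γ|`, and the depth bound `|Γ|` loses nothing.
-/

theorem List.Forall₂.comp {α β γ : Type*} {R : α → β → Prop} {S : β → γ → Prop}
    {T : α → γ → Prop} (h : ∀ a b c, R a b → S b c → T a c) :
    ∀ {l₁ l₂ l₃}, List.Forall₂ R l₁ l₂ → List.Forall₂ S l₂ l₃ → List.Forall₂ T l₁ l₃
  | _, _, _, .nil, .nil => .nil
  | _, _, _, .cons hab h₁, .cons hbc h₂ => .cons (h _ _ _ hab hbc) (h₁.comp h h₂)

theorem List.Forall₂.imp_of_mem_right {α β : Type*} {R S : α → β → Prop} {l₁ : List α}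
    {l₂ : List β} (H : ∀ a b, b ∈ l₂ → R a b → S a b) (h : List.Forall₂ R l₁ l₂) :
    List.Forall₂ S l₁ l₂ := by
  induction h with
  | nil => exact .nil
  | cons hab _ ih =>
    exact .cons (H _ _ List.mem_cons_self hab) (ih fun a b hb => H a b (List.mem_cons_of_mem _ hb))

theorem List.Forall₂.forall_mem_right {α β : Type*} {R : α → β → Prop} {p : β → Prop}
    {l₁ : List α} {l₂ : List β} (H : ∀ a b, R a b → p b) (h : List.Forall₂ R l₁ l₂) :
    ∀ b ∈ l₂, p b := by
  induction h with
  | nil => simp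
  | cons hab _ ih => exact List.forall_mem_cons.2 ⟨H _ _ hab, ih⟩

theorem List.exists_forall₂_of_forall_mem {α β : Type*} {R : α → β → Prop} :
    ∀ {l : List α}, (∀ a ∈ l, ∃ b, R a b) → ∃ l', List.Forall₂ R l l'
  | [], _ => ⟨[], .nil⟩
  | a :: l, h => by
    obtain ⟨b, hb⟩ := h a List.mem_cons_self
    obtain ⟨l', hl'⟩ := exists_forall₂_of_forall_mem fun x hx => h x (List.mem_cons_of_mem _ hx)
    exact ⟨b :: l', .cons hb hl'⟩

theorem ENNReal.iInf_forall₂_sum_le {α β : Type*} (R : α → β → Prop) (f : β → ℝ≥0∞) :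
    ∀ L : List α, ⨅ (bs : List β) (_ : List.Forall₂ R L bs), (bs.map f).sum ≤
      (L.map fun a => ⨅ (b) (_ : R a b), f b).sum
  | [] => iInf₂_le [] .nil
  | a :: L => by
    simp only [List.map_cons, List.sum_cons, ENNReal.iInf_add]
    refine le_iInf₂ fun b hb => le_trans ?_ (add_le_add_right (iInf_forall₂_sum_le R f L) _)
    simp only [ENNReal.add_iInf]
    exact le_iInf₂ fun bs hbs => iInf₂_le (b :: bs) (.cons hb hbs)

theorem ENNReal.ofReal_list_sum_map_of_nonneg {α : Type*} {f : α → ℝ} :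
    ∀ {l : List α}, (∀ a ∈ l, 0 ≤ f a) →
      ENNReal.ofReal (l.map f).sum = (l.map fun a => ENNReal.ofReal (f a)).sum
  | [], _ => by simp
  | a :: l, h => by
    simp only [List.map_cons, List.sum_cons, List.forall_mem_cons] at h ⊢
    rw [ENNReal.ofReal_add h.1 (List.sum_nonneg (by simpa using h.2)),
      ofReal_list_sum_map_of_nonneg h.2]

namespace Tree'

variable {R : Type}

@[elab_as_elim]
theorem induction {P : Tree' R → Prop}
    (node : ∀ r ts, (∀ t ∈ ts, P t) → P (.node r ts)) : ∀ t, P t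
  | .node r ts => node r ts fun t _ => induction node t
decreasing_by
  have := List.sizeOf_lt_of_mem ‹t ∈ ts›
  simp only [Tree'.node.sizeOf_spec]
  omega

end Tree'

section Trees

variable {R : Type}

theorem costP_node (cost : R → ℝ) (r : R) (ts : List (Tree' R)) :
    costP cost (.node r ts) = cost r + (ts.map (costP cost)).sum := by
  rw [costP, List.attach_map_val]

theorem depthP_node (r : R) (ts : List (Tree' R)) :
    depthP (.node r ts) = 1 + (ts.map depthP).foldr max 0 := by
  rw [depthP, List.attach_map_val]

theorem depthP_node_le_succ_iff {r : R} {ts : List (Tree' R)} {k : ℕ} :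
    depthP (.node r ts) ≤ k + 1 ↔ ∀ t ∈ ts, depthP t ≤ k := by
  rw [depthP_node, add_comm, Nat.add_le_add_iff_right]
  induction ts with
  | nil => simp
  | cons t ts ih => simp [ih]

variable {cost : R → ℝ}

theorem costP_nonneg (hcost : ∀ r, 0 ≤ cost r) (t : Tree' R) : 0 ≤ costP cost t := by
  induction t using Tree'.induction with
  | node r ts ih =>
    rw [costP_node]
    exact add_nonneg (hcost r) (List.sum_nonneg (by simpa using ih))

theorem costP_le_costP_node (hcost : ∀ r, 0 ≤ cost r) {r : R} {ts : List (Tree' R)}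
    {t : Tree' R} (ht : t ∈ ts) : costP cost t ≤ costP cost (.node r ts) := by
  rw [costP_node]
  have := List.single_le_sum (by simpa using fun u _ => costP_nonneg hcost u) _
    (List.mem_map_of_mem (f := costP cost) ht)
  linarith [hcost r]

theorem IsSubtree.costP_le (hcost : ∀ r, 0 ≤ cost r) {s t : Tree' R} (h : IsSubtree s t) :
    costP cost s ≤ costP cost t := by
  induction h with
  | refl => rfl
  | child r ts t ht _ ih => exact ih.trans (costP_le_costP_node hcost ht)

theorem ofReal_costP_node (hcost : ∀ r, 0 ≤ cost r) (r : R) (ts : List (Tree' R)) :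
    ENNReal.ofReal (costP cost (.node r ts)) =
      ENNReal.ofReal (cost r) + (ts.map fun t => ENNReal.ofReal (costP cost t)).sum := by
  rw [costP_node, ENNReal.ofReal_add (hcost r)
      (List.sum_nonneg (by simpa using fun u _ => costP_nonneg hcost u)),
    ENNReal.ofReal_list_sum_map_of_nonneg fun u _ => costP_nonneg hcost u]

end Trees

namespace TreeGrammar

variable {G : TreeGrammar}

theorem wf_node_iff {r : G.R} {ts : List (Tree' G.R)} :
    G.WF (.node r ts) ↔ List.Forall₂ G.GenFrom (G.args r) ts := by
  rw [List.forall₂_iff_get]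
  constructor
  · rintro ⟨_, _, hlen, hwf, hlhs⟩
    exact ⟨hlen.symm, fun i h₁ h₂ => ⟨hwf _ (List.getElem_mem h₂), hlhs i h₂⟩⟩
  · rintro ⟨hlen, hgen⟩
    refine .node r ts hlen.symm (fun t ht => ?_) (fun i h => (hgen i (hlen ▸ h) h).2)
    obtain ⟨i, h, rfl⟩ := List.getElem_of_mem ht
    exact (hgen i (hlen ▸ h) h).1

theorem WF.of_isSubtree {s t : Tree' G.R} (h : IsSubtree s t) (ht : G.WF t) : G.WF s := by
  induction h with
  | refl => exact ht
  | child r ts t hmem _ ih =>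
    obtain ⟨_, _, _, hwf, _⟩ := ht
    exact ih (hwf t hmem)

end TreeGrammar

theorem StarCond.of_isSubtree {G : TreeGrammar} {s t : Tree' G.R} (h : IsSubtree s t)
    (ht : StarCond G t) : StarCond G s := by
  induction h with
  | refl => exact ht
  | child r ts t hmem _ ih =>
    obtain ⟨_, _, hsub, _⟩ := ht
    exact ih (hsub t hmem)

theorem OccursLhs.exists_isSubtree {G : TreeGrammar} {X : G.Γ} {t : Tree' G.R}
    (h : OccursLhs G X t) : ∃ s, IsSubtree s t ∧ G.lhs s.rootLabel = X := by
  induction h with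
  | here r ts hr => exact ⟨.node r ts, .refl _, hr⟩
  | there r ts t hmem _ ih =>
    obtain ⟨s, hs, hX⟩ := ih
    exact ⟨s, .child s r ts t hmem hs, hX⟩

theorem StarCond.exists_isSubtree_node {G : TreeGrammar} {r : G.R} {ts : List (Tree' G.R)}
    (hts : ∀ t ∈ ts, StarCond G t) :
    ∃ s, IsSubtree s (.node r ts) ∧ StarCond G s ∧ G.lhs s.rootLabel = G.lhs r := by
  by_cases hocc : ∃ t ∈ ts, OccursLhs G (G.lhs r) t
  · obtain ⟨t, hmem, hocc⟩ := hocc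
    obtain ⟨s, hs, hX⟩ := hocc.exists_isSubtree
    exact ⟨s, .child s r ts t hmem hs, (hts t hmem).of_isSubtree hs, hX⟩
  · push Not at hocc
    exact ⟨.node r ts, .refl _, .node r ts hts hocc, rfl⟩

theorem exists_starCond_costP_le {G : TreeGrammar} {cost : G.R → ℝ} (hcost : ∀ r, 0 ≤ cost r)
    (p : Tree' G.R) {X : G.Γ} (hp : G.GenFrom X p) :
    ∃ q, G.GenFrom X q ∧ StarCond G q ∧ costP cost q ≤ costP cost p := by
  induction p using Tree'.induction generalizing X with
  | node r ts ih =>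
  obtain ⟨hwf, rfl⟩ := hp
  have hgen := TreeGrammar.wf_node_iff.1 hwf
  obtain ⟨qs, hqs⟩ : ∃ qs, List.Forall₂ (fun t q => G.GenFrom (G.lhs t.rootLabel) q ∧
      StarCond G q ∧ costP cost q ≤ costP cost t) ts qs :=
    List.exists_forall₂_of_forall_mem fun t ht =>
      ih t ht ⟨hgen.forall_mem_right (fun _ _ h => h.1) t ht, rfl⟩
  have hwfq : G.WF (.node r qs) := TreeGrammar.wf_node_iff.2 <|
    hgen.comp (fun _ _ _ ht hq => ⟨hq.1.1, hq.1.2.trans ht.2⟩) hqs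
  have hcostq : costP cost (.node r qs) ≤ costP cost (.node r ts) := by
    simp only [costP_node, add_le_add_iff_left]
    exact List.Forall₂.sum_le_sum <| List.forall₂_map_left_iff.2 <|
      List.forall₂_map_right_iff.2 <| hqs.flip.imp fun _ _ h => h.2.2
  obtain ⟨s, hs, hstar, hX⟩ :=
    StarCond.exists_isSubtree_node (r := r) (hqs.forall_mem_right fun _ _ h => h.2.1)
  exact ⟨s, ⟨hwfq.of_isSubtree hs, hX⟩, hstar, (hs.costP_le hcost).trans hcostq⟩

theorem StarCond.depthP_le_card {G : TreeGrammar} {q : Tree' G.R} (hq : StarCond G q)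
    {S : Finset G.Γ} (hS : ∀ Y, OccursLhs G Y q → Y ∈ S) : depthP q ≤ S.card := by
  classical
  induction q using Tree'.induction generalizing S with
  | node r ts ih =>
  obtain ⟨_, _, hsub, hnew⟩ := hq
  have hrS : G.lhs r ∈ S := hS _ (.here r ts rfl)
  obtain ⟨k, hk⟩ : ∃ k, S.card = k + 1 :=
    Nat.exists_eq_succ_of_ne_zero (Finset.card_ne_zero_of_mem hrS)
  rw [hk, depthP_node_le_succ_iff]
  intro t ht
  have hS' : ∀ Y, OccursLhs G Y t → Y ∈ S.erase (G.lhs r) := fun Y hY =>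
    Finset.mem_erase.2 ⟨fun h => hnew t ht (h ▸ hY), hS Y (.there r ts t ht hY)⟩
  simpa [Finset.card_erase_of_mem hrS, hk] using ih t ht (hsub t ht) hS'

theorem StarCond.depthP_le_fintype_card {G : TreeGrammar} [Fintype G.Γ] {q : Tree' G.R}
    (hq : StarCond G q) : depthP q ≤ Fintype.card G.Γ :=
  hq.depthP_le_card fun Y _ => Finset.mem_univ Y

noncomputable def minCostOfDepthLE (G : TreeGrammar) (cost : G.R → ℝ) (k : ℕ) (X : G.Γ) :
    ℝ≥0∞ :=
  ⨅ p ∈ {p : Tree' G.R | G.GenFrom X p ∧ depthP p ≤ k}, ENNReal.ofReal (costP cost p)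

section Bellman

variable {G : TreeGrammar} {cost : G.R → ℝ}

theorem iterate_bellman_top_le_costP (hcost : ∀ r, 0 ≤ cost r) (p : Tree' G.R) {k : ℕ}
    {X : G.Γ} (hp : G.GenFrom X p) (hk : depthP p ≤ k) :
    (bellman G cost)^[k] ⊤ X ≤ ENNReal.ofReal (costP cost p) := by
  induction p using Tree'.induction generalizing k X with
  | node r ts ih =>
  obtain ⟨hwf, rfl⟩ := hp
  obtain _ | k := k
  · rw [depthP_node] at hk
    omega
  rw [Function.iterate_succ_apply', ofReal_costP_node hcost]
  unfold bellman
  refine iInf₂_le_of_le r rfl (add_le_add_right ?_ _)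
  refine List.Forall₂.sum_le_sum <| List.forall₂_map_left_iff.2 <|
    List.forall₂_map_right_iff.2 <| (TreeGrammar.wf_node_iff.1 hwf).imp_of_mem_right
      fun _ t ht hY => ih t ht hY (depthP_node_le_succ_iff.1 hk t ht)

theorem minCostOfDepthLE_le_iterate_bellman_top (hcost : ∀ r, 0 ≤ cost r) (k : ℕ) (X : G.Γ) :
    minCostOfDepthLE G cost k X ≤ (bellman G cost)^[k] ⊤ X := by
  induction k generalizing X with
  | zero => exact le_top
  | succ k ih =>
  rw [Function.iterate_succ_apply']
  refine le_iInf₂ fun r (hr : G.lhs r = X) => ?_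
  calc minCostOfDepthLE G cost (k + 1) X
      ≤ ENNReal.ofReal (cost r) +
          ⨅ (ps) (_ : List.Forall₂ (fun Y p => G.GenFrom Y p ∧ depthP p ≤ k) (G.args r) ps),
            (ps.map fun p => ENNReal.ofReal (costP cost p)).sum := by
        simp only [ENNReal.add_iInf]
        refine le_iInf₂ fun ps hps => ?_
        rw [← ofReal_costP_node hcost]
        refine iInf₂_le _ ⟨⟨TreeGrammar.wf_node_iff.2 (hps.imp fun _ _ h => h.1), hr⟩, ?_⟩
        exact depthP_node_le_succ_iff.2 (hps.forall_mem_right fun _ _ h => h.2)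
    _ ≤ ENNReal.ofReal (cost r) + ((G.args r).map (minCostOfDepthLE G cost k)).sum :=
        add_le_add_right (ENNReal.iInf_forall₂_sum_le _ _ _) _
    _ ≤ ENNReal.ofReal (cost r) + ((G.args r).map ((bellman G cost)^[k] ⊤)).sum :=
        add_le_add_right (List.sum_le_sum fun Y _ => ih Y) _

theorem iterate_bellman_top_eq_minCostOfDepthLE (hcost : ∀ r, 0 ≤ cost r) (k : ℕ) (X : G.Γ) :
    (bellman G cost)^[k] ⊤ X = minCostOfDepthLE G cost k X :=
  le_antisymm (le_iInf₂ fun p hp => iterate_bellman_top_le_costP hcost p hp.1 hp.2)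
    (minCostOfDepthLE_le_iterate_bellman_top hcost k X)

theorem minCostOfDepthLE_card_eq [Fintype G.Γ] (hcost : ∀ r, 0 ≤ cost r) (X : G.Γ) :
    minCostOfDepthLE G cost (Fintype.card G.Γ) X =
      ⨅ p ∈ {p : Tree' G.R | G.GenFrom X p}, ENNReal.ofReal (costP cost p) := by
  refine le_antisymm (le_iInf₂ fun p hp => ?_) (le_iInf₂ fun p hp => iInf₂_le p hp.1)
  obtain ⟨q, hq, hstar, hle⟩ := exists_starCond_costP_le hcost p hp
  exact iInf₂_le_of_le q ⟨hq, hstar.depthP_le_fintype_card⟩ (ENNReal.ofReal_le_ofReal hle)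

end Bellman

open scoped ENNReal in
theorem stmt8_general (G : TreeGrammar) [Fintype G.Γ] (cost : G.R → ℝ)
    (hpos : ∀ r, 0 < cost r) :
    ∀ X : G.Γ, (bellman G cost)^[Fintype.card G.Γ] (fun _ => (⊤ : ℝ≥0∞)) X =
      ⨅ p ∈ {p : Tree' G.R | G.GenFrom X p}, ENNReal.ofReal (costP cost p) := by
  intro X
  have hcost : ∀ r, 0 ≤ cost r := fun r => (hpos r).le
  exact (iterate_bellman_top_eq_minCostOfDepthLE hcost _ X).trans
    (minCostOfDepthLE_card_eq hcost X)

open scoped ENNReal in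
/-- the `|Γ|`-fold iterate of the Bellman operator applied to the
constant-`⊤` function computes the minimal costs. -/
theorem stmt8 (G : TreeGrammar) [Fintype G.Γ] [Fintype G.R] (cost : G.R → ℝ)
    (hpos : ∀ r, 0 < cost r) :
    ∀ X : G.Γ, (bellman G cost)^[Fintype.card G.Γ] (fun _ => (⊤ : ℝ≥0∞)) X =
      ⨅ p ∈ {p : Tree' G.R | G.GenFrom X p}, ENNReal.ofReal (costP cost p) :=
  stmt8_general G cost hpos
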